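/- Let S be a finitely generated additive commutative semigroup, G a locally nilpotent group, and g : S → G a polynomial map. Then the subgroup of G generated by g(S) is finitely generated and nilpotent. -/

import Mathlib

namespace PaperPoly

/-- `DegLE d f` means that `f : S → G` is a polynomial map of degree at most `d ∈ ℕ`:
the base case `DegLE 0 f` means `f` is constant, and `DegLE (d+1) f` means that for every
`s : S` both difference maps `L_s f : t ↦ f (s+t) * (f t)⁻¹` and
`R_s f : t ↦ (f t)⁻¹ * f (s+t)` satisfy `DegLE d`. -/
def DegLE {S : Type*} [AddCommSemigroup S] {G : Type*} [Group G] : ℕ → (S → G) → Prop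
  | 0 => fun f => ∀ t t' : S, f t = f t'
  | d + 1 => fun f => ∀ s : S,
      DegLE d (fun t => f (s + t) * (f t)⁻¹) ∧ DegLE d (fun t => (f t)⁻¹ * f (s + t))

/-- `f` is a polynomial map (of some finite degree). -/
def IsPoly {S : Type*} [AddCommSemigroup S] {G : Type*} [Group G] (f : S → G) : Prop :=
  ∃ d : ℕ, DegLE d f

/-!
By the cocycle identity `L_{a+b} f (t) = L_a f (b + t) · L_b f (t)`, a subgroup `K` containing
`f(T)` and the ranges of the left differences `L_s f` for `s` in a generating set `T` of `S`
contains all of `f(S)`, since `f (a + b) = L_a f (b) · f (b)`. Each `L_s f` takes values in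
`⟨f(S)⟩`, so `⟨f(S)⟩` is generated by `f(T)` together with the subgroups `⟨L_s f (S)⟩`,
`s ∈ T`. As `L_s f` has lower degree, induction on the degree shows that `⟨f(S)⟩` is finitely
generated, and local nilpotency of `G` then makes it nilpotent.
-/

section

variable {S G : Type*} [AddCommSemigroup S] [Group G]

def leftDiff (s : S) (f : S → G) : S → G := fun t => f (s + t) * (f t)⁻¹

lemma leftDiff_add (a b : S) (f : S → G) (t : S) :
    leftDiff (a + b) f t = leftDiff a f (b + t) * leftDiff b f t := by
  simp only [leftDiff, add_assoc, mul_assoc, inv_mul_cancel_left]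

lemma closure_range_leftDiff_le (s : S) (f : S → G) :
    Subgroup.closure (Set.range (leftDiff s f)) ≤ Subgroup.closure (Set.range f) := by
  rw [Subgroup.closure_le]
  rintro _ ⟨t, rfl⟩
  exact mul_mem (Subgroup.subset_closure ⟨s + t, rfl⟩)
    (inv_mem (Subgroup.subset_closure ⟨t, rfl⟩))

lemma range_subset_of_leftDiff_mem {T : Set S} (hT : AddSubsemigroup.closure T = ⊤)
    {f : S → G} {K : Subgroup G} (hfT : f '' T ⊆ K)
    (hdiff : ∀ s ∈ T, Set.range (leftDiff s f) ⊆ K) : Set.range f ⊆ K := by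
  have hdiff_all (a : S) : ∀ t, leftDiff a f t ∈ K := by
    induction (hT ▸ AddSubsemigroup.mem_top a : a ∈ AddSubsemigroup.closure T)
      using AddSubsemigroup.closure_induction with
    | mem s hs => exact fun t => hdiff s hs ⟨t, rfl⟩
    | add a b _ _ ha hb => exact fun t => leftDiff_add a b f t ▸ mul_mem (ha (b + t)) (hb t)
  rintro _ ⟨a, rfl⟩
  induction (hT ▸ AddSubsemigroup.mem_top a : a ∈ AddSubsemigroup.closure T)
    using AddSubsemigroup.closure_induction with
  | mem s hs => exact hfT ⟨s, hs, rfl⟩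
  | add a b _ _ _ hb =>
    have hab : f (a + b) = leftDiff a f b * f b := by simp [leftDiff]
    exact hab ▸ mul_mem (hdiff_all a b) hb

lemma closure_range_fg_of_leftDiff {T : Finset S} (hT : AddSubsemigroup.closure (T : Set S) = ⊤)
    {f : S → G} (hdiff : ∀ s ∈ T, (Subgroup.closure (Set.range (leftDiff s f))).FG) :
    (Subgroup.closure (Set.range f)).FG := by
  classical
  set K := Subgroup.closure (f '' T) ⊔ ⨆ s ∈ T, Subgroup.closure (Set.range (leftDiff s f))
  have hK : K.FG :=
    Subgroup.FG.sup ⟨T.image f, by rw [Finset.coe_image]⟩ (Subgroup.FG.biSup_finset T _ hdiff)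
  suffices Subgroup.closure (Set.range f) = K from this ▸ hK
  refine le_antisymm ((Subgroup.closure_le _).2 ?_) ?_
  · refine range_subset_of_leftDiff_mem hT (Subgroup.subset_closure.trans ?_) fun s hs =>
      Subgroup.subset_closure.trans ?_
    · exact le_sup_left (a := Subgroup.closure (f '' T))
    · exact (le_biSup (fun s => Subgroup.closure (Set.range (leftDiff s f))) hs).trans
        le_sup_right
  · exact sup_le (Subgroup.closure_mono (Set.image_subset_range f T))
      (iSup₂_le fun s _ => closure_range_leftDiff_le s f)

lemma DegLE.closure_range_fg {T : Finset S} (hT : AddSubsemigroup.closure (T : Set S) = ⊤)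
    {d : ℕ} {f : S → G} (hf : DegLE d f) : (Subgroup.closure (Set.range f)).FG := by
  induction d generalizing f with
  | zero =>
    have hconst : (Set.range f).Subsingleton := by
      rintro _ ⟨t, rfl⟩ _ ⟨t', rfl⟩
      exact hf t t'
    exact (Subgroup.fg_iff _).2 ⟨_, rfl, hconst.finite⟩
  | succ d ih => exact closure_range_fg_of_leftDiff hT fun s _ => ih (hf s).1

end

theorem polynomial_map_into_locally_nilpotent_general {S : Type*} [AddCommSemigroup S]
    {G : Type*} [Group G]
    (hS : ∃ T : Finset S, AddSubsemigroup.closure (T : Set S) = ⊤)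
    (hG : ∀ K : Subgroup G, K.FG → Group.IsNilpotent ↥K)
    (g : S → G) (hg : IsPoly g) :
    (Subgroup.closure (Set.range g)).FG ∧
      Group.IsNilpotent ↥(Subgroup.closure (Set.range g)) := by
  obtain ⟨T, hT⟩ := hS
  obtain ⟨d, hd⟩ := hg
  have hfg := hd.closure_range_fg hT
  exact ⟨hfg, hG _ hfg⟩

/-- If `g : S → G` is a polynomial map from a finitely generated additive commutative
semigroup `S` to a locally nilpotent group `G` (every finitely generated subgroup of `G`
is nilpotent), then the subgroup of `G` generated by the image `g(S)` is finitely
generated and nilpotent. -/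
theorem polynomial_map_into_locally_nilpotent {S : Type*} [AddCommSemigroup S] [Nonempty S]
    {G : Type*} [Group G]
    (hS : ∃ T : Finset S, AddSubsemigroup.closure (T : Set S) = ⊤)
    (hG : ∀ K : Subgroup G, K.FG → Group.IsNilpotent ↥K)
    (g : S → G) (hg : IsPoly g) :
    (Subgroup.closure (Set.range g)).FG ∧
      Group.IsNilpotent ↥(Subgroup.closure (Set.range g)) :=
  polynomial_map_into_locally_nilpotent_general hS hG g hg

end PaperPoly
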